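/- arXiv:0811.2526 — 3 statements merged into one kernel-verified Lean document; each statement's English description precedes it below -/
import Mathlib

section
/- If (A) and 3-MSP hold, then for every p, q, s ∈ Σ, the set of superpositions {p,q,s}⁻ equals the λ-closure λ({p,q,s}). -/
universe u v

/-- A state property system: states, a complete lattice of properties, and
the actuality map `xi` assigning to each state the set of actual properties. -/
structure SPS (σ : Type u) (L : Type v) [CompleteLattice L] where
  xi : σ → Set L
  top_mem : ∀ p, ⊤ ∈ xi p
  bot_not_mem : ∀ p, ⊥ ∉ xi p
  sInf_mem : ∀ (p : σ) (A : Set L), (∀ a ∈ A, a ∈ xi p) ↔ sInf A ∈ xi p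
  le_iff : ∀ a b : L, a ≤ b ↔ ∀ r, a ∈ xi r → b ∈ xi r

variable {σ : Type u} {L : Type v} [CompleteLattice L]

/-- λ{p,q} : the set of superpositions of the pair p, q. -/
def SPS.lamPair (S : SPS σ L) (p q : σ) : Set σ := {s | S.xi p ∩ S.xi q ⊆ S.xi s}

/-- A set is λ-closed if it contains λ{p,q} for each pair of its points. -/
def SPS.lamClosed (S : SPS σ L) (T : Set σ) : Prop :=
  ∀ p ∈ T, ∀ q ∈ T, S.lamPair p q ⊆ T

/-- λ(P) : the intersection of all λ-closed sets containing P. -/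
def SPS.lam (S : SPS σ L) (P : Set σ) : Set σ :=
  ⋂₀ {G | S.lamClosed G ∧ P ⊆ G}

/-- The set of superpositions of a set of states. -/
def SPS.bar (S : SPS σ L) (T : Set σ) : Set σ :=
  {p | (⋂ s ∈ T, S.xi s) ⊆ S.xi p}

/-- Property (A): at least two states and `xi` order-reflecting (injective). -/
def SPS.propA (S : SPS σ L) : Prop :=
  (∃ p q : σ, p ≠ q) ∧ ∀ p q : σ, S.xi p ⊆ S.xi q → p = q

/-- p is a minimal superposition of A. -/
def SPS.minSup (S : SPS σ L) (A : Set σ) (p : σ) : Prop :=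
  p ∈ S.bar A ∧ ∀ Q : Set σ, Q ⊂ A → p ∉ S.bar Q

/-- The minimal superposition principle for a given set A. -/
def SPS.MSPon (S : SPS σ L) (A : Set σ) : Prop :=
  ∀ p : σ, S.minSup A p →
    ∀ S₁ S₂ : Set σ, S₁ ⊂ A → S₂ ⊂ A → S₁ ∩ S₂ = ∅ → S₁ ∪ S₂ = A →
      (S.bar (S₁ ∪ {p}) ∩ S.bar S₂).Nonempty

/-- n-MSP : MSP for all sets of cardinality at most n. -/
def SPS.nMSP (S : SPS σ L) (n : ℕ) : Prop :=
  ∀ A : Set σ, A.Finite → A.ncard ≤ n → S.MSPon A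

/-- f-MSP : MSP for all finite sets. -/
def SPS.fMSP (S : SPS σ L) : Prop := ∀ A : Set σ, A.Finite → S.MSPon A

/-!
A superposition `r` of `A = {p, q, s}` that is already a superposition of two points `a, b` of
`A` lies in `λ{a, b} ⊆ λ(A)`. Otherwise `r` is a minimal superposition of `A`, and 3-MSP for the
split `{p} | {q, s}` yields `t ∈ {p, r}⁻ ∩ {q, s}⁻`; so `t ∈ λ(A)`, and `t` is a minimal
superposition of `p, r`. Applying 3-MSP once more, to the split `{p} | {r}`, gives
`r ∈ {p, t}⁻ ⊆ λ(A)`. Conversely, `A⁻` is λ-closed and contains `A`.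
-/

theorem Set.ncard_triple_le {α : Type*} (p q s : α) : ({p, q, s} : Set α).ncard ≤ 3 :=
  (Set.ncard_insert_le _ _).trans <| Nat.succ_le_succ <|
    (Set.ncard_insert_le _ _).trans (by rw [Set.ncard_singleton])

namespace SPS

lemma nMSP.MSPon_triple {S : SPS σ L} (h : S.nMSP 3) (p q s : σ) : S.MSPon {p, q, s} :=
  h _ (Set.toFinite _) (Set.ncard_triple_le p q s)

lemma nMSP.MSPon_pair {S : SPS σ L} (h : S.nMSP 3) (a b : σ) : S.MSPon {a, b} := by
  simpa using h.MSPon_triple a a b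

variable (S : SPS σ L)

lemma bar_mono {T T' : Set σ} (h : T ⊆ T') : S.bar T ⊆ S.bar T' :=
  fun _ hr _ hx => hr (Set.biInter_subset_biInter_left h hx)

lemma subset_bar (T : Set σ) : T ⊆ S.bar T :=
  fun _ ht => Set.biInter_subset_of_mem ht

lemma bar_subset_bar_of_subset_bar {T T' : Set σ} (h : T' ⊆ S.bar T) : S.bar T' ⊆ S.bar T :=
  fun _ hr _ hx => hr (Set.mem_iInter₂.mpr fun _ ht => h ht hx)

lemma bar_pair (a b : σ) : S.bar {a, b} = S.lamPair a b := by
  ext r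
  simp [bar, lamPair]

lemma bar_singleton (hinj : ∀ p q : σ, S.xi p ⊆ S.xi q → p = q) (a : σ) : S.bar {a} = {a} := by
  ext r
  simpa [bar, eq_comm] using ⟨hinj a r, fun h : a = r => h ▸ le_rfl⟩

lemma lamClosed_bar (T : Set σ) : S.lamClosed (S.bar T) :=
  fun _ ha _ hb _ hu _ hx => hu ⟨ha hx, hb hx⟩

lemma subset_lam (T : Set σ) : T ⊆ S.lam T :=
  fun _ ht _ hG => hG.2 ht

lemma lamClosed_lam (T : Set σ) : S.lamClosed (S.lam T) :=
  fun a ha b hb _ hu G hG => hG.1 a (ha G hG) b (hb G hG) hu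

lemma lam_subset {T G : Set σ} (hG : S.lamClosed G) (hTG : T ⊆ G) : S.lam T ⊆ G :=
  Set.sInter_subset_of_mem ⟨hG, hTG⟩

lemma lam_subset_bar (T : Set σ) : S.lam T ⊆ S.bar T :=
  S.lam_subset (S.lamClosed_bar T) (S.subset_bar T)

lemma bar_subset_lam_of_subset_pair {T Q : Set σ} {a b : σ} (ha : a ∈ S.lam T)
    (hb : b ∈ S.lam T) (hQ : Q ⊆ {a, b}) : S.bar Q ⊆ S.lam T :=
  calc S.bar Q ⊆ S.bar {a, b} := S.bar_mono hQ
    _ = S.lamPair a b := S.bar_pair a b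
    _ ⊆ S.lam T := S.lamClosed_lam T a ha b hb

lemma bar_subset_lam_of_ssubset_triple {Q : Set σ} {p q s : σ} (hQ : Q ⊂ {p, q, s}) :
    S.bar Q ⊆ S.lam {p, q, s} := by
  have hp : p ∈ S.lam {p, q, s} := S.subset_lam _ (by simp)
  have hq : q ∈ S.lam {p, q, s} := S.subset_lam _ (by simp)
  have hs : s ∈ S.lam {p, q, s} := S.subset_lam _ (by simp)
  obtain ⟨x, hx, hxQ⟩ := Set.exists_of_ssubset hQ
  have hQx : ∀ y ∈ Q, y ≠ x := fun y hy hyx => hxQ (hyx ▸ hy)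
  have hQA : ∀ y ∈ Q, y = p ∨ y = q ∨ y = s := fun y hy => hQ.1 hy
  rcases hx with rfl | rfl | rfl
  · refine S.bar_subset_lam_of_subset_pair hq hs fun y hy => ?_
    grind
  · refine S.bar_subset_lam_of_subset_pair hp hs fun y hy => ?_
    grind
  · refine S.bar_subset_lam_of_subset_pair hp hq fun y hy => ?_
    grind

lemma exists_mem_bar_insert_inter_of_MSPon {a r : σ} {B : Set σ} (hMSP : S.MSPon (insert a B))
    (ha : a ∉ B) (hB : B.Nonempty) (hr : S.minSup (insert a B) r) :
    (S.bar {a, r} ∩ S.bar B).Nonempty := by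
  obtain ⟨b, hb⟩ := hB
  have ha_ssub : ({a} : Set σ) ⊂ insert a B :=
    (Set.ssubset_iff_of_subset (by simp)).2 ⟨b, Or.inr hb, fun hba => ha (hba ▸ hb)⟩
  simpa only [Set.singleton_union] using
    hMSP r hr {a} B ha_ssub (Set.ssubset_insert ha) (Set.singleton_inter_eq_empty.2 ha)
      Set.singleton_union

lemma minSup_pair (hinj : ∀ p q : σ, S.xi p ⊆ S.xi q → p = q) {a b t : σ}
    (ht : t ∈ S.bar {a, b}) (hta : t ≠ a) (htb : t ≠ b) : S.minSup {a, b} t := by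
  refine ⟨ht, fun Q hQ htQ => ?_⟩
  obtain ⟨x, hx, hxQ⟩ := Set.exists_of_ssubset hQ
  have hQ_sub : Q ⊆ {b} ∨ Q ⊆ {a} := by
    rcases hx with rfl | rfl
    · exact Or.inl fun y hy => (hQ.1 hy).resolve_left (by grind)
    · exact Or.inr fun y hy => (hQ.1 hy).resolve_right (by grind)
  rcases hQ_sub with hQb | hQa
  · exact htb (by simpa [S.bar_singleton hinj] using S.bar_mono hQb htQ)
  · exact hta (by simpa [S.bar_singleton hinj] using S.bar_mono hQa htQ)

lemma mem_lam_of_minSup_triple (hinj : ∀ p q : σ, S.xi p ⊆ S.xi q → p = q) (h3 : S.nMSP 3)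
    {p q s r : σ} (hp : p ∉ ({q, s} : Set σ)) (hr : S.minSup {p, q, s} r) :
    r ∈ S.lam {p, q, s} := by
  have hr_qs : r ∉ S.bar {q, s} := hr.2 _ (Set.ssubset_insert hp)
  have hrp : r ≠ p := by
    rintro rfl
    refine hr.2 {r} ((Set.ssubset_iff_of_subset (by simp)).2 ⟨q, by simp, ?_⟩) (S.subset_bar _ rfl)
    exact fun hqr => hp (hqr ▸ Set.mem_insert q {s})
  obtain ⟨t, ht_pr, ht_qs⟩ :=
    S.exists_mem_bar_insert_inter_of_MSPon (h3.MSPon_triple p q s) hp ⟨q, by simp⟩ hr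
  have ht_lam : t ∈ S.lam {p, q, s} :=
    S.bar_subset_lam_of_ssubset_triple (Set.ssubset_insert hp) ht_qs
  -- `t = p` would put `p`, hence every superposition of `p, q, s`, in `{q, s}⁻`.
  have htp : t ≠ p := by
    rintro rfl
    exact hr_qs (S.bar_subset_bar_of_subset_bar (Set.insert_subset ht_qs (S.subset_bar _)) hr.1)
  have htr : t ≠ r := by
    rintro rfl
    exact hr_qs ht_qs
  obtain ⟨u, hu_pt, hu_r⟩ := S.exists_mem_bar_insert_inter_of_MSPon (h3.MSPon_pair p r)
    (by simpa using hrp.symm) ⟨r, rfl⟩ (S.minSup_pair hinj ht_pr htp htr)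
  rw [S.bar_singleton hinj, Set.mem_singleton_iff] at hu_r
  subst hu_r
  exact S.bar_subset_lam_of_subset_pair (S.subset_lam _ (by simp)) ht_lam le_rfl hu_pt

end SPS

theorem stmt6 (S : SPS σ L) (hA : S.propA) (h3 : S.nMSP 3) :
    ∀ p q s : σ, S.bar {p, q, s} = S.lam {p, q, s} := by
  intro p q s
  refine Set.Subset.antisymm (fun r hr => ?_) (S.lam_subset_bar _)
  by_cases hp : p ∈ ({q, s} : Set σ)
  · exact S.bar_subset_lam_of_subset_pair (S.subset_lam _ (by simp)) (S.subset_lam _ (by simp))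
      (Set.insert_subset hp le_rfl) hr
  by_cases hmin : S.minSup {p, q, s} r
  · exact S.mem_lam_of_minSup_triple hA.2 h3 hp hmin
  · obtain ⟨Q, hQ, hrQ⟩ : ∃ Q ⊂ {p, q, s}, r ∈ S.bar Q := by simpa [SPS.minSup, hr] using hmin
    exact S.bar_subset_lam_of_ssubset_triple hQ hrQ
end

section
/- If (A), (B) and (C) hold, then L equipped with b' := ⋁{a_s : b ≤ a_s'} is a complete, atomistic, orthocomplemented lattice (b ≤ c ⇒ c' ≤ b', b'' = b, b ∧ b' = 0, b ∨ b' = I). -/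
universe u v

variable {σ : Type u} {L : Type v} [CompleteLattice L]

/-- Probability structure on a subset `L0` of the property lattice:
`mu p a` is the probability of property `a` in state `p`, satisfying (Oi)-(Oiii). -/
structure ProbStruct (S : SPS σ L) (L0 : Set L) where
  bot_mem : (⊥ : L) ∈ L0
  top_mem : (⊤ : L) ∈ L0
  mu : σ → L → ℝ
  nonneg : ∀ p, ∀ a ∈ L0, 0 ≤ mu p a
  le_one : ∀ p, ∀ a ∈ L0, mu p a ≤ 1
  Oi : ∀ p, ∀ a ∈ L0, (mu p a = 1 ↔ a ∈ S.xi p)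
  Oii : ∀ p, ∀ a ∈ L0, ∀ b ∈ L0, a ≤ b → mu p a ≤ mu p b
  Oiii : ∀ a : ℕ → L, (∀ i, a i ∈ L0) →
    (∀ i j, i ≠ j → ∀ p, mu p (a i) + mu p (a j) ≤ 1) →
    ∃ b ∈ L0, ∀ p, HasSum (fun i => mu p (a i)) (1 - mu p b)

/-- `oc` is the orthocomplementation on `L0` associated with the probability structure. -/
def ocProp (S : SPS σ L) (L0 : Set L) (P : ProbStruct S L0) (oc : L → L) : Prop :=
  ∀ a ∈ L0, oc a ∈ L0 ∧ ∀ p, P.mu p a + P.mu p (oc a) = 1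

/-- The atom associated to a state: the smallest actual property. -/
def atomOf (S : SPS σ L) (p : σ) : L := sInf (S.xi p)

/-- The orthocomplementation extended to all of L: b' = ⋁{a_s : b ≤ (a_s)'}. -/
def negL (S : SPS σ L) (oc : L → L) (b : L) : L :=
  sSup {a | ∃ s : σ, a = atomOf S s ∧ b ≤ oc (atomOf S s)}

/-!
A property is determined by the atoms `a_s` below it (`b ≤ x` iff every `a_s ≤ b` has
`a_s ≤ x`), so all order questions reduce to atoms. Through the probabilities, `a_t ≤ a_s'` becomes a symmetric and
irreflexive orthogonality relation between states; `b'` is the join of the atoms orthogonal to `b`,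
and (C), which exhibits `b` as the meet of the `a_s'` above it, yields `b'' = b` and `b ∨ b' = I`.
-/

namespace SPS

variable (S : SPS σ L)

lemma atomOf_mem_xi (p : σ) : atomOf S p ∈ S.xi p :=
  (S.sInf_mem p (S.xi p)).mp fun _ ha => ha

lemma mem_xi_iff_atomOf_le (p : σ) (x : L) : x ∈ S.xi p ↔ atomOf S p ≤ x :=
  ⟨fun h => sInf_le h, fun h => (S.le_iff _ _).mp h p (S.atomOf_mem_xi p)⟩

lemma le_iff_forall_atomOf_le (b x : L) :
    b ≤ x ↔ ∀ t, atomOf S t ≤ b → atomOf S t ≤ x := by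
  simp only [S.le_iff b x, S.mem_xi_iff_atomOf_le]

lemma isAtom_atomOf (hinj : ∀ p q : σ, S.xi p ⊆ S.xi q → p = q) (s : σ) :
    IsAtom (atomOf S s) := by
  refine ⟨fun h => S.bot_not_mem s (h ▸ S.atomOf_mem_xi s), fun x hx => ?_⟩
  by_contra hx_ne
  obtain ⟨t, htx, -⟩ : ∃ t, atomOf S t ≤ x ∧ ¬ atomOf S t ≤ ⊥ := by
    by_contra! h
    exact hx_ne (le_bot_iff.mp ((S.le_iff_forall_atomOf_le x ⊥).mpr h))
  have hts : s = t := hinj s t fun b hb => (S.mem_xi_iff_atomOf_le t b).mpr <|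
    htx.trans (hx.le.trans ((S.mem_xi_iff_atomOf_le s b).mp hb))
  exact hx.not_ge (hts ▸ htx)

lemma isAtomistic (hinj : ∀ p q : σ, S.xi p ⊆ S.xi q → p = q) : IsAtomistic L := by
  refine CompleteLattice.isAtomistic_iff.2 fun b =>
    ⟨{a | ∃ t, a = atomOf S t ∧ a ≤ b}, le_antisymm ?_ (sSup_le ?_), ?_⟩
  · exact (S.le_iff_forall_atomOf_le b _).mpr fun t ht => le_sSup ⟨t, rfl, ht⟩
  · rintro _ ⟨t, rfl, ht⟩
    exact ht
  · rintro _ ⟨t, rfl, -⟩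
    exact S.isAtom_atomOf hinj t

end SPS

namespace ocProp

variable {S : SPS σ L} {L0 : Set L} {P : ProbStruct S L0} {oc : L → L}

lemma oc_oc (hoc : ocProp S L0 P oc) {a : L} (ha : a ∈ L0) : oc (oc a) = a := by
  obtain ⟨hoca, hsum⟩ := hoc a ha
  obtain ⟨hococa, hsum'⟩ := hoc (oc a) hoca
  have hxi : ∀ p, oc (oc a) ∈ S.xi p ↔ a ∈ S.xi p := fun p => by
    rw [← P.Oi p _ hococa, ← P.Oi p a ha]
    constructor <;> intro <;> linarith [hsum p, hsum' p]
  exact le_antisymm ((S.le_iff _ _).mpr fun r => (hxi r).mp)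
    ((S.le_iff _ _).mpr fun r => (hxi r).mpr)

lemma oc_le_oc (hoc : ocProp S L0 P oc) {a b : L} (ha : a ∈ L0) (hb : b ∈ L0)
    (hab : a ≤ b) : oc b ≤ oc a := by
  refine (S.le_iff _ _).mpr fun p hp => (P.Oi p _ (hoc a ha).1).mp ?_
  have hocb : P.mu p (oc b) = 1 := (P.Oi p _ (hoc b hb).1).mpr hp
  linarith [(hoc a ha).2 p, (hoc b hb).2 p, P.Oii p a ha b hb hab, P.le_one p _ (hoc a ha).1]

lemma le_oc_comm (hoc : ocProp S L0 P oc) {a b : L} (ha : a ∈ L0) (hb : b ∈ L0)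
    (hab : a ≤ oc b) : b ≤ oc a :=
  hoc.oc_oc hb ▸ hoc.oc_le_oc ha (hoc b hb).1 hab

lemma oc_not_mem_xi (hoc : ocProp S L0 P oc) {a : L} (ha : a ∈ L0) {p : σ}
    (hp : a ∈ S.xi p) : oc a ∉ S.xi p := fun hp' => by
  have h1 := (P.Oi p a ha).mpr hp
  have h2 := (P.Oi p _ (hoc a ha).1).mpr hp'
  linarith [(hoc a ha).2 p]

lemma not_atomOf_le_oc (hoc : ocProp S L0 P oc) {s : σ} (hs : atomOf S s ∈ L0) :
    ¬ atomOf S s ≤ oc (atomOf S s) := fun h =>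
  hoc.oc_not_mem_xi hs (S.atomOf_mem_xi s) ((S.mem_xi_iff_atomOf_le s _).mpr h)

end ocProp

section negL

variable (S : SPS σ L) (oc : L → L)

lemma atomOf_le_negL {b : L} {s : σ} (h : b ≤ oc (atomOf S s)) :
    atomOf S s ≤ negL S oc b :=
  le_sSup ⟨s, rfl, h⟩

lemma negL_le {b x : L} (h : ∀ s, b ≤ oc (atomOf S s) → atomOf S s ≤ x) : negL S oc b ≤ x :=
  sSup_le fun _ ⟨s, ha, hs⟩ => ha ▸ h s hs

lemma negL_antitone : Antitone (negL S oc) := fun _ _ hbc =>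
  negL_le S oc fun _ hs => atomOf_le_negL S oc (hbc.trans hs)

variable {S oc}

lemma negL_le_oc_atomOf
    (hsymm : ∀ s t, atomOf S t ≤ oc (atomOf S s) → atomOf S s ≤ oc (atomOf S t))
    {b : L} {t : σ} (ht : atomOf S t ≤ b) : negL S oc b ≤ oc (atomOf S t) :=
  negL_le S oc fun s hs => hsymm s t (ht.trans hs)

lemma le_of_forall_le_oc_atomOf
    (hC : ∀ b : L, b = sInf {x | ∃ s : σ, x = oc (atomOf S s) ∧ b ≤ x}) {b x : L}
    (h : ∀ s, b ≤ oc (atomOf S s) → x ≤ oc (atomOf S s)) : x ≤ b :=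
  (le_sInf <| by rintro _ ⟨s, rfl, hs⟩; exact h s hs).trans_eq (hC b).symm

lemma negL_negL
    (hsymm : ∀ s t, atomOf S t ≤ oc (atomOf S s) → atomOf S s ≤ oc (atomOf S t))
    (hC : ∀ b : L, b = sInf {x | ∃ s : σ, x = oc (atomOf S s) ∧ b ≤ x}) (b : L) :
    negL S oc (negL S oc b) = b := by
  refine le_antisymm (le_of_forall_le_oc_atomOf hC fun s hs => ?_) ?_
  · exact negL_le_oc_atomOf hsymm (atomOf_le_negL S oc hs)
  · exact (S.le_iff_forall_atomOf_le _ _).mpr fun t ht =>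
      atomOf_le_negL S oc (negL_le_oc_atomOf hsymm ht)

lemma inf_negL_eq_bot
    (hsymm : ∀ s t, atomOf S t ≤ oc (atomOf S s) → atomOf S s ≤ oc (atomOf S t))
    (hirr : ∀ s, ¬ atomOf S s ≤ oc (atomOf S s)) (b : L) : b ⊓ negL S oc b = ⊥ := by
  refine le_bot_iff.mp ((S.le_iff_forall_atomOf_le _ _).mpr fun t ht => (hirr t ?_).elim)
  exact (ht.trans inf_le_right).trans (negL_le_oc_atomOf hsymm (ht.trans inf_le_left))

lemma sup_negL_eq_top (hirr : ∀ s, ¬ atomOf S s ≤ oc (atomOf S s))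
    (hC : ∀ b : L, b = sInf {x | ∃ s : σ, x = oc (atomOf S s) ∧ b ≤ x}) (b : L) :
    b ⊔ negL S oc b = ⊤ := by
  refine top_le_iff.mp (le_of_forall_le_oc_atomOf hC fun s hs => (hirr s ?_).elim)
  exact (atomOf_le_negL S oc (le_sup_left.trans hs)).trans (le_sup_right.trans hs)

end negL

theorem stmt13 (S : SPS σ L) (L0 : Set L) (P : ProbStruct S L0)
    (oc : L → L) (hoc : ocProp S L0 P oc)
    (hA : S.propA)
    (hB : ∀ s : σ, atomOf S s ∈ L0)
    (hC : ∀ b : L, b = sInf {x | ∃ s : σ, x = oc (atomOf S s) ∧ b ≤ x}) :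
    -- L with b ↦ b' is an orthocomplemented lattice
    (∀ b c : L, b ≤ c → negL S oc c ≤ negL S oc b) ∧
    (∀ b : L, negL S oc (negL S oc b) = b) ∧
    (∀ b : L, b ⊓ negL S oc b = ⊥) ∧
    (∀ b : L, b ⊔ negL S oc b = ⊤) ∧
    -- and L is atomistic
    (∀ b : L, b = sSup {a : L | IsAtom a ∧ a ≤ b}) := by
  have hsymm : ∀ s t, atomOf S t ≤ oc (atomOf S s) → atomOf S s ≤ oc (atomOf S t) :=
    fun s t => hoc.le_oc_comm (hB t) (hB s)
  have hirr : ∀ s, ¬ atomOf S s ≤ oc (atomOf S s) := fun s => hoc.not_atomOf_le_oc (hB s)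
  have := S.isAtomistic hA.2
  exact ⟨fun _ _ h => negL_antitone S oc h, negL_negL hsymm hC, inf_negL_eq_bot hsymm hirr,
    sup_negL_eq_top hirr hC, fun b => (sSup_atoms_le_eq b).symm⟩
end

section
/- If (A), (B), (C) hold, then for every T ⊆ Σ, the biorthogonal T'' equals the set of superpositions T̄, and the map S ↦ S' is an orthocomplementation on F(Σ) = {S ⊆ Σ : S = S̄}, making F(Σ) a complete, atomistic, orthocomplemented lattice. -/
universe u v

variable {σ : Type u} {L : Type v} [CompleteLattice L]

/-- Orthogonality of states: p ⊥ q iff some a ∈ L0 is actual in p with a' actual in q. -/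
def statePerp (S : SPS σ L) (L0 : Set L) (oc : L → L) (p q : σ) : Prop :=
  ∃ a ∈ L0, a ∈ S.xi p ∧ oc a ∈ S.xi q

/-- T' : the set of states orthogonal to every state of T. -/
def setPerp (S : SPS σ L) (L0 : Set L) (oc : L → L) (T : Set σ) : Set σ :=
  {p | ∀ t ∈ T, statePerp S L0 oc p t}

/-!
A state `p` is a superposition of `T` iff its atom lies below the join `b` of the atoms of `T`,
and, since orthogonality is always witnessed by an atom, `q ∈ T'` iff `b ≤ oc (atomOf q)`.
Axiom (C) writes `b` as the meet of the `oc (atomOf q)` above it, so `p ∈ T''` iff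
`atomOf p ≤ b`, i.e. `T'' = T̄`. The orthocomplement laws on closed sets then follow formally
from this and the irreflexivity of `⊥`.
-/

section Atoms

variable (S : SPS σ L)

lemma atomOf_mem_xi (p : σ) : atomOf S p ∈ S.xi p :=
  (S.sInf_mem p (S.xi p)).mp fun _ h => h

lemma mem_xi_iff_atomOf_le {p : σ} {a : L} : a ∈ S.xi p ↔ atomOf S p ≤ a :=
  ⟨fun h => sInf_le h, fun h => (S.le_iff _ _).mp h p (atomOf_mem_xi S p)⟩

lemma mem_bar_iff_atomOf_le {T : Set σ} {p : σ} :
    p ∈ S.bar T ↔ atomOf S p ≤ sSup (atomOf S '' T) := by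
  have mem_iInter_iff : ∀ a : L, a ∈ ⋂ s ∈ T, S.xi s ↔ sSup (atomOf S '' T) ≤ a := by
    intro a
    simp only [Set.mem_iInter, sSup_le_iff, Set.forall_mem_image, mem_xi_iff_atomOf_le]
  constructor
  · intro h
    exact (mem_xi_iff_atomOf_le S).mp (h ((mem_iInter_iff _).mpr le_rfl))
  · intro h a ha
    exact (mem_xi_iff_atomOf_le S).mpr (h.trans ((mem_iInter_iff a).mp ha))

lemma bar_singleton (hA : S.propA) (p : σ) : S.bar {p} = {p} := by
  ext q
  rw [SPS.bar, Set.mem_ofPred_eq, Set.biInter_singleton, Set.mem_singleton_iff]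
  exact ⟨fun h => (hA.2 p q h).symm, fun h => h ▸ subset_rfl⟩

end Atoms

section Perp

variable {S : SPS σ L} {L0 : Set L} {oc : L → L}

lemma setPerp_antitone : Antitone (setPerp S L0 oc) :=
  fun _ _ hTU _ hp t ht => hp t (hTU ht)

lemma setPerp_union (T U : Set σ) :
    setPerp S L0 oc (T ∪ U) = setPerp S L0 oc T ∩ setPerp S L0 oc U := by
  ext p
  simp only [setPerp, Set.mem_ofPred_eq, Set.mem_inter_iff, Set.mem_union, or_imp, forall_and]

lemma setPerp_empty : setPerp S L0 oc ∅ = Set.univ := by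
  ext p
  simp [setPerp]

variable {P : ProbStruct S L0} (hoc : ocProp S L0 P oc)
include hoc

lemma oc_mem_xi_iff_mu_eq_zero {a : L} (ha : a ∈ L0) (p : σ) :
    oc a ∈ S.xi p ↔ P.mu p a = 0 := by
  rw [← P.Oi p _ (hoc a ha).1]
  have := (hoc a ha).2 p
  constructor <;> intro <;> linarith

lemma statePerp_symm {p q : σ} (h : statePerp S L0 oc p q) : statePerp S L0 oc q p := by
  obtain ⟨a, ha, hap, haq⟩ := h
  refine ⟨oc a, (hoc a ha).1, haq, ?_⟩
  rw [oc_mem_xi_iff_mu_eq_zero hoc (hoc a ha).1]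
  have := (hoc a ha).2 p
  linarith [(P.Oi p a ha).mpr hap]

lemma not_statePerp_self (p : σ) : ¬ statePerp S L0 oc p p := by
  rintro ⟨a, ha, hap, hoap⟩
  have := (P.Oi p a ha).mpr hap
  rw [(oc_mem_xi_iff_mu_eq_zero hoc ha p).mp hoap] at this
  exact zero_ne_one this

lemma inter_setPerp_self (T : Set σ) : T ∩ setPerp S L0 oc T = ∅ :=
  Set.eq_empty_iff_forall_notMem.mpr fun p ⟨hpT, hpT'⟩ => not_statePerp_self hoc p (hpT' p hpT)

lemma mem_setPerp_iff_subset {T : Set σ} {p : σ} :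
    p ∈ setPerp S L0 oc T ↔ T ⊆ setPerp S L0 oc {p} := by
  simp only [setPerp, Set.mem_singleton_iff, forall_eq]
  exact ⟨fun h t ht => statePerp_symm hoc (h t ht), fun h t ht => statePerp_symm hoc (h ht)⟩

variable (hB : ∀ s : σ, atomOf S s ∈ L0)
include hB

/-- If `a` is actual in `p`, then `atomOf p ≤ a`, so `μ_q (atomOf p) ≤ μ_q a = 0` whenever
`oc a` is actual in `q`. -/
lemma statePerp_iff_atomOf_le {p q : σ} :
    statePerp S L0 oc p q ↔ atomOf S q ≤ oc (atomOf S p) := by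
  rw [← mem_xi_iff_atomOf_le]
  refine ⟨?_, fun h => ⟨atomOf S p, hB p, atomOf_mem_xi S p, h⟩⟩
  rintro ⟨a, ha, hap, hoaq⟩
  rw [oc_mem_xi_iff_mu_eq_zero hoc (hB p)]
  have hle := P.Oii q _ (hB p) a ha ((mem_xi_iff_atomOf_le S).mp hap)
  rw [(oc_mem_xi_iff_mu_eq_zero hoc ha q).mp hoaq] at hle
  exact le_antisymm hle (P.nonneg q _ (hB p))

lemma mem_setPerp_iff_sSup_le {T : Set σ} {q : σ} :
    q ∈ setPerp S L0 oc T ↔ sSup (atomOf S '' T) ≤ oc (atomOf S q) := by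
  simp only [setPerp, Set.mem_ofPred_eq, sSup_le_iff, Set.forall_mem_image,
    statePerp_iff_atomOf_le hoc hB]

theorem setPerp_setPerp_eq_bar
    (hC : ∀ b : L, b = sInf {x | ∃ s : σ, x = oc (atomOf S s) ∧ b ≤ x}) (T : Set σ) :
    setPerp S L0 oc (setPerp S L0 oc T) = S.bar T := by
  ext p
  rw [mem_setPerp_iff_subset hoc, mem_bar_iff_atomOf_le]
  simp only [Set.subset_def, mem_setPerp_iff_sSup_le hoc hB, Set.image_singleton, sSup_singleton]
  refine ⟨fun h => ?_, fun h q hq => h.trans hq⟩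
  rw [hC (sSup (atomOf S '' T))]
  refine le_sInf ?_
  rintro _ ⟨q, rfl, hq⟩
  exact h q hq

end Perp

theorem stmt15 (S : SPS σ L) (L0 : Set L) (P : ProbStruct S L0)
    (oc : L → L) (hoc : ocProp S L0 P oc)
    (hA : S.propA)
    (hB : ∀ s : σ, atomOf S s ∈ L0)
    (hC : ∀ b : L, b = sInf {x | ∃ s : σ, x = oc (atomOf S s) ∧ b ≤ x}) :
    -- the biorthogonal equals the set of superpositions
    (∀ T : Set σ, setPerp S L0 oc (setPerp S L0 oc T) = S.bar T) ∧
    -- S ↦ S' is an orthocomplementation on F(Σ)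
    (∀ T U : Set σ, T ⊆ U → setPerp S L0 oc U ⊆ setPerp S L0 oc T) ∧
    (∀ T : Set σ, S.bar T = T →
      S.bar (setPerp S L0 oc T) = setPerp S L0 oc T ∧
      setPerp S L0 oc (setPerp S L0 oc T) = T ∧
      T ∩ setPerp S L0 oc T = ∅ ∧
      S.bar (T ∪ setPerp S L0 oc T) = Set.univ) ∧
    -- F(Σ) is atomistic with singletons as atoms
    (∀ p : σ, S.bar {p} = {p}) := by
  have biperp := setPerp_setPerp_eq_bar hoc hB hC
  refine ⟨biperp, fun _ _ => (setPerp_antitone ·), fun T hT => ?_, bar_singleton S hA⟩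
  have hT' : setPerp S L0 oc (setPerp S L0 oc T) = T := (biperp T).trans hT
  refine ⟨?_, hT', inter_setPerp_self hoc T, ?_⟩
  · rw [← biperp, hT']
  · rw [← biperp, setPerp_union, hT', Set.inter_comm, inter_setPerp_self hoc, setPerp_empty]
end
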